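/- arXiv:cs/0112014 — 7 statements merged into one kernel-verified Lean document; each statement's English description precedes it below -/
import Mathlib

section
/- Isolated equality property of counter-assisted generators: if x is the state sequence of a counter-assisted generator x_i = f(x_{i-1}) + i (mod n), then for all indices i, j with i ≢ j (mod n), x_i = x_j implies x_{i+1} ≠ x_{j+1} and (if i, j ≥ 1) x_{i-1} ≠ x_{j-1}. -/
/-- Isolated equality property of counter-assisted generators.
If `x` satisfies `x i = f (x (i-1)) + i (mod n)`, then for indices `i ≢ j (mod n)`
with `x i = x j`, we have `x (i+1) ≠ x (j+1)` and (when `i, j ≥ 1`)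
`x (i-1) ≠ x (j-1)`. -/
theorem stmt_3 (n : ℕ) (hn : 2 ≤ n) (f : ZMod n → ZMod n)
    (x : ℕ → ZMod n)
    (hx : ∀ i, x (i + 1) = f (x i) + ((i + 1 : ℕ) : ZMod n))
    (i j : ℕ) (hij : (i : ZMod n) ≠ (j : ZMod n)) (hxx : x i = x j) :
    x (i + 1) ≠ x (j + 1) ∧ (1 ≤ i → 1 ≤ j → x (i - 1) ≠ x (j - 1)) := by
  constructor
  · intro h
    rw [hx i, hx j, hxx] at h
    apply hij
    have := add_left_cancel h
    push_cast at this ⊢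
    linear_combination this
  · intro hi hj h
    obtain ⟨i', rfl⟩ := Nat.exists_eq_add_of_le hi
    obtain ⟨j', rfl⟩ := Nat.exists_eq_add_of_le hj
    simp only [Nat.add_sub_cancel_left] at h
    rw [show 1 + i' = i' + 1 by ring, show 1 + j' = j' + 1 by ring] at hxx hij
    rw [hx i', hx j', h] at hxx
    apply hij
    have := add_left_cancel hxx
    push_cast at this ⊢
    linear_combination this
end

section
/- Square-root diversity lower bound for counter-assisted generators: for any f : ZMod n → ZMod n, the counter-assisted generator x_i = f(x_{i-1}) + i (mod n) satisfies D_G(k) ≥ √(k-1) for all k ≤ n + 1, where D_G(k) is the minimum over seeds of the number of distinct values in any contiguous window of length k of the state sequence. Precisely, for every seed s and every i, the number ν of distinct values among x_i,...,x_{i+k-1} satisfies ν² ≥ k - 1. -/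
/-!
The pair `(x j, x (j + 1))` determines the counter `j + 1 = x (j + 1) - f (x j)` in `ZMod n`,
so the `k - 1 ≤ n` consecutive pairs of a window of length `k` are pairwise distinct. They all lie
in `S × S`, where `S` is the set of values in the window, whence `k - 1 ≤ |S|²`.
-/

open Finset

theorem sub_one_le_card_image_range_sq_of_injOn_consecutive_pairs {α : Type*} [DecidableEq α]
    (y : ℕ → α) (k : ℕ) (hy : Set.InjOn (fun j => (y j, y (j + 1))) (range (k - 1))) :
    k - 1 ≤ ((range k).image y).card ^ 2 := by
  set S := (range k).image y
  have hmem : ∀ j < k, y j ∈ S := fun j hj => mem_image_of_mem y (mem_range.mpr hj)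
  calc k - 1 = (range (k - 1)).card := (card_range _).symm
    _ ≤ (S ×ˢ S).card := by
      refine card_le_card_of_injOn _ (fun j hj => ?_) hy
      have hj : j < k - 1 := mem_range.mp hj
      exact mem_product.mpr ⟨hmem j (by omega), hmem (j + 1) (by omega)⟩
    _ = S.card ^ 2 := by rw [card_product, sq]

theorem injOn_consecutive_pairs_of_counter_step {n : ℕ} (f : ZMod n → ZMod n) (x : ℕ → ZMod n)
    (hx : ∀ i, x (i + 1) = f (x i) + ((i + 1 : ℕ) : ZMod n)) (i m : ℕ) (hm : m ≤ n) :
    Set.InjOn (fun j => (x (i + j), x (i + j + 1))) (range m) := by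
  intro a ha b hb hab
  obtain ⟨hxa, hxa'⟩ := Prod.mk.inj hab
  have ha : a < n := (mem_range.mp ha).trans_le hm
  have hb : b < n := (mem_range.mp hb).trans_le hm
  have hcounter : ((i + a + 1 : ℕ) : ZMod n) = ((i + b + 1 : ℕ) : ZMod n) := by
    rw [hx, hx, hxa] at hxa'
    exact add_left_cancel hxa'
  have hmod : a ≡ b [MOD n] :=
    Nat.ModEq.add_left_cancel' i (Nat.ModEq.add_right_cancel' 1
      ((ZMod.natCast_eq_natCast_iff _ _ _).mp hcounter))
  rwa [Nat.ModEq, Nat.mod_eq_of_lt ha, Nat.mod_eq_of_lt hb] at hmod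

theorem stmt_5_general (n : ℕ) (f : ZMod n → ZMod n)
    (k : ℕ) (hk2 : k ≤ n + 1)
    (x : ℕ → ZMod n)
    (hx : ∀ i, x (i + 1) = f (x i) + ((i + 1 : ℕ) : ZMod n))
    (i : ℕ) :
    k - 1 ≤ ((Finset.range k).image (fun j => x (i + j))).card ^ 2 :=
  sub_one_le_card_image_range_sq_of_injOn_consecutive_pairs _ k
    (injOn_consecutive_pairs_of_counter_step f x hx i (k - 1) (by omega))

/-- Square-root diversity lower bound for counter-assisted generators.
For any `f : ZMod n → ZMod n`, any seed, and any window `x i, …, x (i+k-1)` of the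
state sequence `x_i = f (x_{i-1}) + i (mod n)` with `1 ≤ k ≤ n + 1`, the number `ν` of
distinct values in the window satisfies `ν² ≥ k - 1`. -/
theorem stmt_5 (n : ℕ) (hn : 2 ≤ n) (f : ZMod n → ZMod n)
    (k : ℕ) (hk1 : 1 ≤ k) (hk2 : k ≤ n + 1)
    (s : ZMod n) (x : ℕ → ZMod n) (hx0 : x 0 = s)
    (hx : ∀ i, x (i + 1) = f (x i) + ((i + 1 : ℕ) : ZMod n))
    (i : ℕ) :
    k - 1 ≤ ((Finset.range k).image (fun j => x (i + j))).card ^ 2 :=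
  stmt_5_general n f k hk2 x hx i
end

section
/- Image-size diversity lower bound: for any f : ZMod n → ZMod n and any seed, any contiguous window of length k ≤ n of the state sequence of the counter-assisted generator x_i = f(x_{i-1}) + i contains at least k / |Im(f)| distinct values (i.e., the number ν of distinct values satisfies ν · |Im(f)| ≥ k). -/
/-!
Every term after the seed has the form `x m = f (x (m - 1)) + m`, so it is determined by the pair
`(x m, x m - m)`, whose second coordinate lies in `Im f`. Within a window of `k ≤ n` consecutive
indices the counters `m` are distinct in `ZMod n`, so the pair determines the index: the window
injects into (distinct values) × `Im f`.
-/

open Finset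

theorem Finset.card_le_card_image_mul_of_sub_mem {ι G : Type*} [AddGroup G] [DecidableEq G]
    (J : Finset ι) (T : Finset G) (x c : ι → G) (hc : Set.InjOn c J)
    (hT : ∀ j ∈ J, x j - c j ∈ T) :
    #J ≤ #(J.image x) * #T := by
  rw [← card_product]
  refine card_le_card_of_injOn (fun j => (x j, x j - c j)) (fun j hj => ?_) ?_
  · exact mem_product.2 ⟨mem_image_of_mem x hj, hT j hj⟩
  · intro j hj j' hj' hjj'
    obtain ⟨hx, hxc⟩ := Prod.mk.inj hjj'
    rw [hx, sub_right_inj] at hxc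
    exact hc hj hj' hxc

theorem ZMod.natCast_add_injOn_range (n a : ℕ) :
    Set.InjOn (fun j : ℕ => ((a + j : ℕ) : ZMod n)) (range n) := by
  intro j hj j' hj' h
  have hmod : j ≡ j' [MOD n] :=
    Nat.ModEq.add_left_cancel' a ((ZMod.natCast_eq_natCast_iff _ _ _).1 h)
  exact Nat.ModEq.eq_of_lt_of_lt hmod (mem_range.1 hj) (mem_range.1 hj')

theorem stmt_6_general (n : ℕ) [NeZero n] (f : ZMod n → ZMod n)
    (x : ℕ → ZMod n)
    (hx : ∀ i, x (i + 1) = f (x i) + ((i + 1 : ℕ) : ZMod n))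
    (i : ℕ) (hi : 1 ≤ i) (k : ℕ) (hk2 : k ≤ n) :
    k ≤ ((Finset.range k).image (fun j => x (i + j))).card *
        (Finset.univ.image f).card := by
  have hcounter : Set.InjOn (fun j : ℕ => ((i + j : ℕ) : ZMod n)) (range k) :=
    (ZMod.natCast_add_injOn_range n i).mono (by simpa using range_subset_range.2 hk2)
  have hdiff : ∀ j ∈ range k, x (i + j) - ((i + j : ℕ) : ZMod n) ∈ univ.image f := by
    intro j _
    obtain ⟨m, hm⟩ : ∃ m, i + j = m + 1 := ⟨i + j - 1, by omega⟩
    rw [hm, hx m, add_sub_cancel_right]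
    exact mem_image_of_mem f (mem_univ _)
  simpa using card_le_card_image_mul_of_sub_mem (range k) (univ.image f) _ _ hcounter hdiff

/-- Image-size diversity lower bound. For any `f : ZMod n → ZMod n` and any
seed, any contiguous window of length `k ≤ n` (starting at position `i ≥ 1`) of the state
sequence of the counter-assisted generator `x_i = f (x_{i-1}) + i` contains at least
`k / |Im f|` distinct values: the number `ν` of distinct values satisfies
`ν * |Im f| ≥ k`. -/
theorem stmt_6 (n : ℕ) (hn : 2 ≤ n) [NeZero n] (f : ZMod n → ZMod n)
    (s : ZMod n) (x : ℕ → ZMod n) (hx0 : x 0 = s)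
    (hx : ∀ i, x (i + 1) = f (x i) + ((i + 1 : ℕ) : ZMod n))
    (i : ℕ) (hi : 1 ≤ i) (k : ℕ) (hk1 : 1 ≤ k) (hk2 : k ≤ n) :
    k ≤ ((Finset.range k).image (fun j => x (i + j))).card *
        (Finset.univ.image f).card :=
  stmt_6_general n f x hx i hi k hk2
end

section
/- Asymptotic tightness of the square-root bound: for every n such that n/2 is a perfect square, there exists a function f : ZMod n → ZMod n and a seed s such that the state sequence of the counter-assisted generator x_i = f(x_{i-1}) + i (mod n) is eventually periodic with at most √(2n) distinct values appearing in total (total diversity at most √(2n)). -/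
def dA (β k : ℕ) : ℕ := 2*β*((k/β + (if k % β = 0 then 0 else 1)) % β)

def dB (β k : ℕ) : ℕ := if k % β = 0 then 2*β+1 else 2*(k % β)+1

def dX (β n i : ℕ) : ZMod n := if i % 2 = 0 then ((dA β (i/2) : ℕ) : ZMod n) else ((dB β (i/2) : ℕ) : ZMod n)

def dF (β n : ℕ) (v : ZMod n) : ZMod n :=
  if v.val % 2 = 0 then ((2*β : ℕ) : ZMod n) - v
  else if v = ((2*β+1 : ℕ) : ZMod n) then ((2*β : ℕ) : ZMod n) - 2
  else ((2*β - 1 : ℕ) : ZMod n) - v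

lemma valpar (n : ℕ) [NeZero n] (h2 : 2 ∣ n) (m : ℕ) : ((m : ZMod n)).val % 2 = m % 2 := by
  rw [ZMod.val_natCast]; exact Nat.mod_mod_of_dvd m h2

lemma castmul (β m : ℕ) : ((2*β*(m % β) : ℕ) : ZMod (2*β^2)) = ((2*β*m : ℕ) : ZMod (2*β^2)) := by
  rw [ZMod.natCast_eq_natCast_iff]
  have h := (Nat.mod_modEq m β).mul_left' (c := 2*β)
  have h2 : 2*β^2 = 2*β*β := by ring
  rw [h2]; exact h

lemma dX_even (β n k : ℕ) : dX β n (2*k) = ((dA β k : ℕ) : ZMod n) := by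
  unfold dX
  have h1 : (2*k) % 2 = 0 := by omega
  have h2 : (2*k) / 2 = k := by omega
  rw [h1, h2]; simp

lemma dX_odd (β n k : ℕ) : dX β n (2*k+1) = ((dB β k : ℕ) : ZMod n) := by
  unfold dX
  have h1 : (2*k+1) % 2 = 1 := by omega
  have h2 : (2*k+1) / 2 = k := by omega
  rw [h1, h2]; simp

lemma key (β : ℕ) (hβ : 1 ≤ β) (i : ℕ) :
    dX β (2*β^2) (i+1) = dF β (2*β^2) (dX β (2*β^2) i) + ((i+1 : ℕ) : ZMod (2*β^2)) := by
  haveI : NeZero (2*β^2) := ⟨by positivity⟩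
  have hdvd : 2 ∣ 2*β^2 := ⟨β^2, rfl⟩
  rcases Nat.even_or_odd i with ⟨k, hk⟩ | ⟨k, hk⟩
  · -- i = 2k
    subst hk
    have hk2 : k + k = 2*k := by ring
    rw [hk2]
    obtain ⟨q, r, hr, rfl⟩ : ∃ q r, r < β ∧ k = β*q + r :=
      ⟨k/β, k%β, Nat.mod_lt _ (by omega), (Nat.div_add_mod k β).symm⟩
    have hmod : (β*q + r) % β = r := by rw [Nat.mul_add_mod]; exact Nat.mod_eq_of_lt hr
    have hdiv : (β*q + r) / β = q := by
      rw [Nat.mul_add_div (by omega)]; rw [Nat.div_eq_of_lt hr]; omega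
    rw [show 2*(β*q+r)+1 = 2*(β*q+r)+1 from rfl, dX_even, dX_odd]
    have hApar : ((dA β (β*q+r) : ℕ) : ZMod (2*β^2)).val % 2 = 0 := by
      rw [valpar _ hdvd]
      unfold dA; rw [mul_assoc]; exact Nat.mul_mod_right 2 _
    unfold dF
    rw [if_pos hApar]
    have hA : ((dA β (β*q+r) : ℕ) : ZMod (2*β^2))
        = ((2*β*(q + (if r = 0 then 0 else 1)) : ℕ) : ZMod (2*β^2)) := by
      unfold dA; rw [hdiv, hmod, castmul]
    rw [hA]
    unfold dB
    rw [hmod]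
    rcases eq_or_ne r 0 with rfl | hr0
    · simp only [if_pos rfl]
      push_cast
      ring
    · simp only [if_neg hr0]
      push_cast
      ring
  · -- i = 2k+1
    subst hk
    obtain ⟨q, r, hr, rfl⟩ : ∃ q r, r < β ∧ k = β*q + r :=
      ⟨k/β, k%β, Nat.mod_lt _ (by omega), (Nat.div_add_mod k β).symm⟩
    have hmod : (β*q + r) % β = r := by rw [Nat.mul_add_mod]; exact Nat.mod_eq_of_lt hr
    rw [show 2*(β*q+r)+1+1 = 2*((β*q+r)+1) from by ring, dX_even, dX_odd]
    have hBpar : ((dB β (β*q+r) : ℕ) : ZMod (2*β^2)).val % 2 = 1 := by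
      rw [valpar _ hdvd]
      unfold dB; split <;> omega
    unfold dF
    rw [if_neg (by omega)]
    rcases eq_or_ne r 0 with rfl | hr0
    · -- r = 0 : dB = 2β+1, special branch
      have hB : dB β (β*q+0) = 2*β+1 := by unfold dB; rw [hmod, if_pos rfl]
      rw [hB, if_pos rfl]
      have hA : ((dA β ((β*q+0)+1) : ℕ) : ZMod (2*β^2))
          = ((2*β*(q+1) : ℕ) : ZMod (2*β^2)) := by
        rcases eq_or_lt_of_le hβ with hβ1 | hβ2
        · -- β = 1
          have hb : β = 1 := hβ1.symm
          subst hb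
          have h0 : dA 1 (1*q+0+1) = 0 := by unfold dA; simp [Nat.mod_one]
          rw [h0, ZMod.natCast_eq_natCast_iff]
          have : (2*1*(q+1)) % (2*1^2) = 0 := by
            norm_num [Nat.mul_mod_right]
          unfold Nat.ModEq
          omega
        · -- β ≥ 2
          have hm : (β*q+0+1) % β = 1 := by
            rw [Nat.add_zero, Nat.mul_add_mod]; exact Nat.mod_eq_of_lt hβ2
          have hd : (β*q+0+1) / β = q := by
            rw [Nat.add_zero, Nat.mul_add_div (by omega)]
            rw [Nat.div_eq_of_lt hβ2]; omega
          unfold dA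
          rw [hm, hd, if_neg (by omega), castmul]
      rw [hA]
      push_cast
      ring
    · -- r > 0 (hence β ≥ 2)
      have hβ2 : 2 ≤ β := by omega
      have hB : dB β (β*q+r) = 2*r+1 := by unfold dB; rw [hmod, if_neg hr0]
      have hne : ((dB β (β*q+r) : ℕ) : ZMod (2*β^2)) ≠ ((2*β+1 : ℕ) : ZMod (2*β^2)) := by
        rw [hB]
        intro hEq
        have hbb : 2*β ≤ β*β := Nat.mul_le_mul_right β hβ2
        have hlt1 : 2*r+1 < 2*β^2 := by rw [pow_two]; omega
        have hlt2 : 2*β+1 < 2*β^2 := by rw [pow_two]; omega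
        have := congrArg ZMod.val hEq
        rw [ZMod.val_natCast_of_lt hlt1, ZMod.val_natCast_of_lt hlt2] at this
        omega
      rw [if_neg hne, hB]
      have hA : ((dA β ((β*q+r)+1) : ℕ) : ZMod (2*β^2))
          = ((2*β*(q+1) : ℕ) : ZMod (2*β^2)) := by
        rcases eq_or_ne (r+1) β with hrb | hrb
        · have hk1 : β*q+r+1 = β*(q+1) := by rw [Nat.mul_add, Nat.mul_one]; omega
          unfold dA
          rw [hk1, Nat.mul_mod_right, Nat.mul_div_cancel_left _ (by omega : 0 < β),
            if_pos rfl, Nat.add_zero, castmul]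
        · have hm : (β*q+r+1) % β = r+1 := by
            rw [Nat.add_assoc, Nat.mul_add_mod]; exact Nat.mod_eq_of_lt (by omega)
          have hd : (β*q+r+1) / β = q := by
            rw [Nat.add_assoc, Nat.mul_add_div (by omega)]
            rw [Nat.div_eq_of_lt (by omega)]; omega
          unfold dA
          rw [hm, hd, if_neg (by omega), castmul]
      rw [hA]
      have h1 : (1 : ℕ) ≤ 2*β - 1 + 1 := by omega
      push_cast [Nat.cast_sub (by omega : 1 ≤ 2*β)]
      ring

lemma key_per (β : ℕ) (hβ : 1 ≤ β) (i : ℕ) :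
    dX β (2*β^2) (i + 2*β^2) = dX β (2*β^2) i := by
  have hb : 2*β^2 = 2*(β*β) := by ring
  rcases Nat.even_or_odd i with ⟨k, hk⟩ | ⟨k, hk⟩
  · subst hk
    rw [show k+k+2*β^2 = 2*(k+β*β) from by rw [hb]; ring, show k+k = 2*k from by ring,
      dX_even, dX_even]
    have hm : (k+β*β) % β = k % β := Nat.add_mul_mod_self_left k β β
    have hd : (k+β*β) / β = k/β + β := Nat.add_mul_div_left k β (by omega)
    unfold dA
    rw [hm, hd, show k/β + β + (if k % β = 0 then 0 else 1)
        = (k/β + (if k % β = 0 then 0 else 1)) + β from by ring, Nat.add_mod_right]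
  · subst hk
    rw [show 2*k+1+2*β^2 = 2*(k+β*β)+1 from by rw [hb]; ring, dX_odd, dX_odd]
    have hm : (k+β*β) % β = k % β := Nat.add_mul_mod_self_left k β β
    unfold dB
    rw [hm]

/-- Asymptotic tightness of the square-root bound. For every `n = 2β²`
(so that `n/2` is a perfect square, and `√(2n) = 2β`), there exist `f : ZMod n → ZMod n`
and a seed `s` such that the state sequence of the counter-assisted generator
`x_i = f (x_{i-1}) + i (mod n)` is eventually periodic and takes at most
`2β = √(2n)` distinct values in total. -/
theorem stmt_8 (β : ℕ) (hβ : 1 ≤ β) (n : ℕ) (hn : n = 2 * β ^ 2) [NeZero n] :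
    ∃ (f : ZMod n → ZMod n) (s : ZMod n), ∀ x : ℕ → ZMod n,
      x 0 = s → (∀ i, x (i + 1) = f (x i) + ((i + 1 : ℕ) : ZMod n)) →
      (∃ p, 0 < p ∧ ∃ i₀, ∀ i, i₀ ≤ i → x (i + p) = x i) ∧
      (Set.range x).ncard ≤ 2 * β := by
  subst hn
  refine ⟨dF β (2*β^2), dX β (2*β^2) 0, ?_⟩
  intro x hx0 hxrec
  have hxX : ∀ i, x i = dX β (2*β^2) i := by
    intro i
    induction i with
    | zero => exact hx0
    | succ i ih => rw [hxrec i, ih, ← key β hβ i]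
  constructor
  · refine ⟨2*β^2, by positivity, 0, fun i _ => ?_⟩
    rw [hxX, hxX, key_per β hβ i]
  · set F : Finset (ZMod (2*β^2)) :=
      ((Finset.range β).image fun m => ((2*β*m : ℕ) : ZMod (2*β^2))) ∪
      ((Finset.range β).image fun u => ((2*(u+1)+1 : ℕ) : ZMod (2*β^2))) with hF
    have hsub : Set.range x ⊆ ↑F := by
      rintro v ⟨i, rfl⟩
      rw [hxX]
      unfold dX
      split
      · apply Finset.mem_coe.mpr
        apply Finset.mem_union_left
        apply Finset.mem_image.mpr
        exact ⟨(i/2/β + (if (i/2) % β = 0 then 0 else 1)) % β,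
          Finset.mem_range.mpr (Nat.mod_lt _ (by omega)), rfl⟩
      · apply Finset.mem_coe.mpr
        apply Finset.mem_union_right
        apply Finset.mem_image.mpr
        unfold dB
        split
        · exact ⟨β-1, Finset.mem_range.mpr (by omega), by rw [show β-1+1 = β from by omega]⟩
        · refine ⟨(i/2) % β - 1, Finset.mem_range.mpr ?_, ?_⟩
          · have := Nat.mod_lt (i/2) (show 0 < β by omega)
            omega
          · have h1 : 1 ≤ (i/2) % β := by omega
            rw [show (i/2) % β - 1 + 1 = (i/2) % β from by omega]
    calc (Set.range x).ncard ≤ (↑F : Set (ZMod (2*β^2))).ncard :=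
          Set.ncard_le_ncard hsub F.finite_toSet
      _ = F.card := Set.ncard_coe_finset F
      _ ≤ ((Finset.range β).image fun m => ((2*β*m : ℕ) : ZMod (2*β^2))).card
          + ((Finset.range β).image fun u => ((2*(u+1)+1 : ℕ) : ZMod (2*β^2))).card :=
          Finset.card_union_le _ _
      _ ≤ β + β := Nat.add_le_add
          ((Finset.card_image_le).trans_eq (Finset.card_range β))
          ((Finset.card_image_le).trans_eq (Finset.card_range β))
      _ ≤ 2*β := by omega
end

section
/- Explicit low-diversity construction: let n = 2β² for β ≥ 1, and define a_i = 2 + 2βi and b_j = 1 + 2j in ZMod n for 0 ≤ i, j < β. Define f : ZMod n → ZMod n by f(a_i) = -2βi, f(b_j) = -2j for j < β-1, f(b_{β-1}) = 2, and arbitrarily elsewhere (the values a_i, b_j are pairwise distinct). Then the counter-assisted generator x_i = f(x_{i-1}) + i seeded with x₀ = a₀ satisfies: x_{2(βi+j)} = a_i and x_{2(βi+j)+1} = b_j for all i, j < β (indices extended periodically with period 2β² = n), so the sequence takes exactly 2β = √(2n) distinct values. -/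
/-- Explicit low-diversity construction. Let `n = 2β²`, `a i = 2 + 2βi`,
`b j = 1 + 2j` in `ZMod n` for `i, j < β`. If `f : ZMod n → ZMod n` satisfies
`f (a i) = -(2βi)`, `f (b j) = -(2j)` for `j < β - 1`, and `f (b (β-1)) = 2`,
then the counter-assisted generator `x_i = f (x_{i-1}) + i` seeded with `x 0 = a 0`
satisfies `x (2(βi+j) + nq) = a i` and `x (2(βi+j) + 1 + nq) = b j` for all `i, j < β`
and all `q` (periodic extension with period `n = 2β²`), so the sequence takes exactly
`2β = √(2n)` distinct values. -/
theorem stmt_9 (β : ℕ) (hβ : 1 ≤ β) (n : ℕ) (hn : n = 2 * β ^ 2) [NeZero n]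
    (a b : ℕ → ZMod n)
    (ha : ∀ i, a i = ((2 + 2 * β * i : ℕ) : ZMod n))
    (hb : ∀ j, b j = ((1 + 2 * j : ℕ) : ZMod n))
    (f : ZMod n → ZMod n)
    (hfa : ∀ i, i < β → f (a i) = -((2 * β * i : ℕ) : ZMod n))
    (hfb : ∀ j, j < β - 1 → f (b j) = -((2 * j : ℕ) : ZMod n))
    (hfb' : f (b (β - 1)) = 2)
    (x : ℕ → ZMod n) (hx0 : x 0 = a 0)
    (hx : ∀ i, x (i + 1) = f (x i) + ((i + 1 : ℕ) : ZMod n)) :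
    (∀ i j q : ℕ, i < β → j < β →
      x (2 * (β * i + j) + n * q) = a i ∧ x (2 * (β * i + j) + 1 + n * q) = b j) ∧
    (Set.range x).ncard = 2 * β := by
  have hβpos : 0 < β := hβ
  -- casting helper: 2βm only depends on m mod β
  have hcast : ∀ m : ℕ, ((2 * β * m : ℕ) : ZMod n) = ((2 * β * (m % β) : ℕ) : ZMod n) := by
    intro m
    conv_lhs => rw [show m = β * (m / β) + m % β from (Nat.div_add_mod m β).symm]
    rw [Nat.mul_add, show 2 * β * (β * (m / β)) = n * (m / β) by rw [hn]; ring]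
    push_cast
    rw [ZMod.natCast_self]
    ring
  have ha' : ∀ m : ℕ, ((2 + 2 * β * m : ℕ) : ZMod n) = a (m % β) := by
    intro m
    rw [ha, Nat.cast_add, Nat.cast_add, hcast]
  -- odd step
  have keyodd : ∀ k : ℕ, x (2 * k) = ((2 + 2 * β * (k / β) : ℕ) : ZMod n) →
      x (2 * k + 1) = ((1 + 2 * (k % β) : ℕ) : ZMod n) := by
    intro k hk
    rw [hx (2 * k), hk, ha' (k / β), hfa _ (Nat.mod_lt _ hβpos), ← hcast (k / β)]
    have hnat : 2 * k + 1 = 2 * β * (k / β) + (1 + 2 * (k % β)) := by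
      have h := Nat.div_add_mod k β
      have h2 : 2 * β * (k / β) = 2 * (β * (k / β)) := by ring
      omega
    rw [hnat, Nat.cast_add]
    ring
  -- even values by induction
  have key : ∀ k : ℕ, x (2 * k) = ((2 + 2 * β * (k / β) : ℕ) : ZMod n) := by
    intro k
    induction k with
    | zero => simpa using hx0.trans (by rw [ha 0]; norm_num)
    | succ k ih =>
      have hodd := keyodd k ih
      rw [show 2 * (k + 1) = (2 * k + 1) + 1 by ring, hx, hodd]
      obtain ⟨d, hd⟩ : ∃ d, d = k / β := ⟨_, rfl⟩
      obtain ⟨m, hm⟩ : ∃ m, m = β * d := ⟨_, rfl⟩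
      have hdm : m + k % β = k := by
        have h := Nat.div_add_mod k β
        rw [hm, hd]; omega
      have hmod : k % β < β := Nat.mod_lt _ hβpos
      by_cases hj : k % β = β - 1
      · rw [show (1 + 2 * (k % β) : ℕ) = 1 + 2 * (β - 1) by rw [hj], ← hb (β - 1), hfb']
        have hdiv : (k + 1) / β = d + 1 := by
          rw [show k + 1 = β * (d + 1) by rw [Nat.mul_add, Nat.mul_one, ← hm]; omega,
            Nat.mul_div_cancel_left _ hβpos]
        rw [hdiv, show 2 + 2 * β * (d + 1) = (2 * k + 1 + 1) + 2 by
            have h2 : 2 * β * (d + 1) = 2 * m + 2 * β := by rw [hm]; ring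
            omega,
          Nat.cast_add]
        push_cast
        ring
      · rw [← hb (k % β), hfb _ (by omega)]
        have hdiv : (k + 1) / β = d := by
          rw [show k + 1 = (k % β + 1) + β * d by omega,
            Nat.add_mul_div_left _ _ hβpos, Nat.div_eq_of_lt (by omega), Nat.zero_add]
        rw [hdiv, show 2 * k + 1 + 1 = (1 + 2 * (k % β)) + (1 + 2 * m) by omega]
        rw [show (2 + 2 * β * d : ℕ) = 1 + (1 + 2 * m) by
            have h2 : 2 * β * d = 2 * m := by rw [hm]; ring
            omega]
        push_cast
        ring
  -- main periodicity claim
  have hmain : ∀ i j q : ℕ, i < β → j < β →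
      x (2 * (β * i + j) + n * q) = a i ∧ x (2 * (β * i + j) + 1 + n * q) = b j := by
    intro i j q hi hj
    obtain ⟨k, hk⟩ : ∃ k, k = β * i + j + β ^ 2 * q := ⟨_, rfl⟩
    have hdiv : k / β = i + β * q := by
      rw [hk, show β * i + j + β ^ 2 * q = j + β * (i + β * q) by ring,
        Nat.add_mul_div_left _ _ hβpos, Nat.div_eq_of_lt hj, Nat.zero_add]
    have hmod : k % β = j := by
      rw [hk, show β * i + j + β ^ 2 * q = j + β * (i + β * q) by ring,
        Nat.add_mul_mod_self_left, Nat.mod_eq_of_lt hj]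
    constructor
    · have h := key k
      rw [show 2 * k = 2 * (β * i + j) + n * q by rw [hn, hk]; ring] at h
      rw [h, hdiv, ha i,
        show 2 + 2 * β * (i + β * q) = (2 + 2 * β * i) + n * q by rw [hn]; ring,
        Nat.cast_add]
      push_cast
      rw [ZMod.natCast_self]
      ring
    · have h := keyodd k (key k)
      rw [show 2 * k + 1 = 2 * (β * i + j) + 1 + n * q by rw [hn, hk]; ring] at h
      rw [h, hmod, hb j]
  refine ⟨hmain, ?_⟩
  classical
  -- distinctness
  have hab : ∀ i j : ℕ, a i ≠ b j := by
    intro i j hEq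
    rw [ha, hb, ZMod.natCast_eq_natCast_iff] at hEq
    have h2 : (2 + 2 * β * i) ≡ (1 + 2 * j) [MOD 2] := hEq.of_dvd ⟨β ^ 2, hn⟩
    have h3 : (2 + 2 * β * i) % 2 = (1 + 2 * j) % 2 := h2
    have h4 : 2 * β * i = 2 * (β * i) := by ring
    omega
  have hainj : ∀ i i' : ℕ, i < β → i' < β → a i = a i' → i = i' := by
    intro i i' hi hi' hEq
    rw [ha, ha, ZMod.natCast_eq_natCast_iff] at hEq
    have h2 : 2 * β * i ≡ 2 * β * i' [MOD n] := Nat.ModEq.add_left_cancel' 2 hEq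
    have hlt : ∀ i'' : ℕ, i'' < β → 2 * β * i'' < n := by
      intro i'' hi''
      have h1 : 2 * β * (i'' + 1) ≤ 2 * β * β := Nat.mul_le_mul (le_refl (2 * β)) hi''
      have h2 : 2 * β * (i'' + 1) = 2 * β * i'' + 2 * β := by ring
      have h3 : n = 2 * β * β := by rw [hn]; ring
      omega
    have h3 : (2 * β * i) % n = (2 * β * i') % n := h2
    rw [Nat.mod_eq_of_lt (hlt i hi), Nat.mod_eq_of_lt (hlt i' hi')] at h3
    exact Nat.eq_of_mul_eq_mul_left (by omega) h3
  have hbinj : ∀ j j' : ℕ, j < β → j' < β → b j = b j' → j = j' := by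
    intro j j' hj hj' hEq
    rw [hb, hb, ZMod.natCast_eq_natCast_iff] at hEq
    have hlt : ∀ j'' : ℕ, j'' < β → 1 + 2 * j'' < n := by
      intro j'' hj''
      have h1 : β * 1 ≤ β * β := Nat.mul_le_mul (le_refl β) hβpos
      have h3 : n = 2 * (β * β) := by rw [hn]; ring
      omega
    have h3 : (1 + 2 * j) % n = (1 + 2 * j') % n := hEq
    rw [Nat.mod_eq_of_lt (hlt j hj), Nat.mod_eq_of_lt (hlt j' hj')] at h3
    omega
  -- the range as a finset
  have hS : Set.range x = ↑((Finset.range β).image a ∪ (Finset.range β).image b) := by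
    ext v
    simp only [Set.mem_range, Finset.coe_union, Set.mem_union, Finset.coe_image,
      Set.mem_image, Finset.mem_coe, Finset.mem_range]
    constructor
    · rintro ⟨t, rfl⟩
      rcases Nat.even_or_odd t with ⟨c, hc⟩ | ⟨c, hc⟩
      · left
        exact ⟨c / β % β, Nat.mod_lt _ hβpos, by rw [show t = 2 * c by omega, key c, ha' (c / β)]⟩
      · right
        exact ⟨c % β, Nat.mod_lt _ hβpos,
          by rw [show t = 2 * c + 1 by omega, keyodd c (key c), hb]⟩
    · rintro (⟨i, hi, rfl⟩ | ⟨j, hj, rfl⟩)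
      · exact ⟨2 * (β * i + 0) + n * 0, (hmain i 0 0 hi hβpos).1⟩
      · exact ⟨2 * (β * 0 + j) + 1 + n * 0, (hmain 0 j 0 hβpos hj).2⟩
  have hdisj : Disjoint ((Finset.range β).image a) ((Finset.range β).image b) := by
    rw [Finset.disjoint_left]
    intro v hva hvb
    simp only [Finset.mem_image, Finset.mem_range] at hva hvb
    obtain ⟨i, hi, rfl⟩ := hva
    obtain ⟨j, hj, hEq⟩ := hvb
    exact hab i j hEq.symm
  rw [hS, Set.ncard_coe_finset, Finset.card_union_of_disjoint hdisj,
    Finset.card_image_of_injOn (fun i hi i' hi' h =>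
      hainj i i' (by simpa using hi) (by simpa using hi') h),
    Finset.card_image_of_injOn (fun j hj j' hj' h =>
      hbinj j j' (by simpa using hj) (by simpa using hj') h),
    Finset.card_range]
  omega
end

section
/- Sequence-assisted diversity lower bound: if c is an assisting sequence and x the state sequence of the sequence-assisted generator x_i = f(x_{i-1}) ⋆ c_i, then the number of distinct values in any window x_m,...,x_{m+k-1} of length k is at least √(D_c(k) − 1), where D_c(k) is the minimum number of distinct values in any length-k window of c. More precisely, ν² ≥ D_c(k) − 1 where ν is the number of distinct values in the window. -/
/-- Sequence-assisted diversity lower bound. If `c` is an assisting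
sequence and `x` the state sequence of the sequence-assisted generator
`x i = f (x (i-1)) ⋆ c i` with `⋆` a Latin square operation, then the number `ν` of
distinct values in any window `x m, …, x (m+k-1)` satisfies `ν² ≥ D_c(k) − 1`,
where `D_c(k)` is the minimum number of distinct values in any length-`k` window
of `c`. -/
theorem stmt_11 {X : Type*} [DecidableEq X]
    (star : X → X → X)
    (h1 : ∀ a : X, Function.Injective (star a))
    (h2 : ∀ b : X, Function.Injective (fun a => star a b))
    (f : X → X) (c x : ℕ → X)
    (hx : ∀ i, x (i + 1) = star (f (x i)) (c (i + 1)))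
    (k m : ℕ) :
    (⨅ i : ℕ, ((Finset.range k).image (fun j => c (i + j))).card) - 1 ≤
      ((Finset.range k).image (fun j => x (m + j))).card ^ 2 := by
  have hne : Nonempty X := ⟨c 0⟩
  set S : Finset X := (Finset.range k).image (fun j => x (m + j)) with hS
  have h0 : (⨅ i : ℕ, ((Finset.range k).image (fun j => c (i + j))).card)
      ≤ ((Finset.range k).image (fun j => c (m + 1 + j))).card :=
    ciInf_le (OrderBot.bddBelow _) (m + 1)
  refine le_trans (Nat.sub_le_sub_right h0 1) ?_
  set g : X → X → X := fun a b => Function.invFun (star (f a)) b with hg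
  have hgx : ∀ j : ℕ, g (x (m + j)) (x (m + j + 1)) = c (m + 1 + j) := by
    intro j
    have hx' := hx (m + j)
    have : c (m + 1 + j) = c (m + j + 1) := by ring_nf
    rw [this, hg]
    simp only [hx']
    exact Function.leftInverse_invFun (h1 (f (x (m + j)))) _
  set P : Finset (X × X) :=
    (Finset.range (k - 1)).image (fun j => (x (m + j), x (m + j + 1))) with hP
  have hsub : ((Finset.range k).image (fun j => c (m + 1 + j))) ⊆
      insert (c (m + 1 + (k - 1))) (P.image (fun p => g p.1 p.2)) := by
    intro y hy
    simp only [Finset.mem_image, Finset.mem_range, Finset.mem_insert] at hy ⊢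
    obtain ⟨j, hj, rfl⟩ := hy
    by_cases h : j = k - 1
    · left; rw [h]
    · right
      have hmem : (x (m + j), x (m + j + 1)) ∈ P := by
        rw [hP]
        exact Finset.mem_image.2 ⟨j, Finset.mem_range.2 (by omega), rfl⟩
      exact ⟨(x (m + j), x (m + j + 1)), hmem, hgx j⟩
  have hcard1 : ((Finset.range k).image (fun j => c (m + 1 + j))).card ≤
      P.card + 1 := by
    calc ((Finset.range k).image (fun j => c (m + 1 + j))).card
        ≤ (insert (c (m + 1 + (k - 1))) (P.image (fun p => g p.1 p.2))).card :=
          Finset.card_le_card hsub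
      _ ≤ (P.image (fun p => g p.1 p.2)).card + 1 := Finset.card_insert_le _ _
      _ ≤ P.card + 1 := by
          exact Nat.add_le_add_right (Finset.card_image_le) 1
  have hPsub : P ⊆ S ×ˢ S := by
    intro p hp
    simp only [hP, Finset.mem_image, Finset.mem_range] at hp
    obtain ⟨j, hj, rfl⟩ := hp
    simp only [Finset.mem_product, hS, Finset.mem_image, Finset.mem_range]
    exact ⟨⟨j, by omega, rfl⟩, ⟨j + 1, by omega, by ring_nf⟩⟩
  have hcard2 : P.card ≤ S.card ^ 2 := by
    calc P.card ≤ (S ×ˢ S).card := Finset.card_le_card hPsub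
      _ = S.card ^ 2 := by rw [Finset.card_product, sq]
  omega
end

section
/- Lower bound on window diversity combining both bounds: for any f : ZMod n → ZMod n, the counter-assisted generator x_i = f(x_{i-1}) + i is max(γ(k), η(k))-diverse, where γ(k) = √(k−1) for k ≤ n and √n for k > n, and η(k) = k/|Im f| for k ≤ n and n/|Im f| for k > n; i.e., every length-k window of every state sequence contains at least max(γ(k), η(k)) distinct values. -/
/-!
Since `x (m + 1) - f (x m)` is the counter value `m + 1`, any two consecutive states (or a state
together with the image of its predecessor) determine the position modulo `n`. Hence within one
window the `min (k - 1) n` consecutive pairs are distinct elements of `W × W`, and the `min k n`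
pairs `(x m, f (x (m - 1)))` are distinct elements of `W × Im f`, where `W` is the set of values
in the window.
-/

open Finset

section CounterAssisted

variable {G : Type*} [AddGroup G] {f : G → G} {c : ℕ → G} {x : ℕ → G}

theorem counter_eq_of_step_eq (hx : ∀ m, x (m + 1) = f (x m) + c (m + 1)) {m m' : ℕ}
    (hf : f (x m) = f (x m')) (hstep : x (m + 1) = x (m' + 1)) : c (m + 1) = c (m' + 1) := by
  rw [hx, hx, hf] at hstep
  exact add_left_cancel hstep

theorem le_card_window_sq [DecidableEq G]
    (hx : ∀ m, x (m + 1) = f (x m) + c (m + 1)) {a t k : ℕ}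
    (htk : t + 1 ≤ k) (hc : Set.InjOn c (Set.Ico (a + 1) (a + 1 + t))) :
    t ≤ ((range k).image fun j => x (a + j)).card ^ 2 := by
  set W := (range k).image fun j => x (a + j)
  have hmem : ∀ j < k, x (a + j) ∈ W := fun j hj => mem_image_of_mem _ (mem_range.2 hj)
  have hpairs : ((range t).image fun j => (x (a + j), x (a + j + 1))).card = t := by
    rw [card_image_of_injOn, card_range]
    rintro j hj j' hj' hjj'
    simp only [coe_range, Set.mem_Iio, Prod.mk.injEq] at hj hj' hjj'
    have hcount := counter_eq_of_step_eq hx (congrArg f hjj'.1) hjj'.2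
    have := hc ⟨by omega, by omega⟩ ⟨by omega, by omega⟩ hcount
    omega
  calc t = ((range t).image fun j => (x (a + j), x (a + j + 1))).card := hpairs.symm
    _ ≤ (W ×ˢ W).card := card_le_card fun p hp => by
      obtain ⟨j, hj, rfl⟩ := mem_image.1 hp
      rw [mem_range] at hj
      exact mem_product.2 ⟨hmem j (by omega), hmem (j + 1) (by omega)⟩
    _ = W.card ^ 2 := by rw [card_product, sq]

theorem le_card_window_mul_card_image [DecidableEq G] [Fintype G]
    (hx : ∀ m, x (m + 1) = f (x m) + c (m + 1)) {a t k : ℕ}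
    (htk : t ≤ k) (hc : Set.InjOn c (Set.Ico (a + 1) (a + 1 + t))) :
    t ≤ ((range k).image fun j => x (a + 1 + j)).card * (univ.image f).card := by
  set W := (range k).image fun j => x (a + 1 + j)
  have hpairs : ((range t).image fun j => (x (a + 1 + j), f (x (a + j)))).card = t := by
    rw [card_image_of_injOn, card_range]
    rintro j hj j' hj' hjj'
    simp only [coe_range, Set.mem_Iio, Prod.mk.injEq] at hj hj' hjj'
    have hcount := counter_eq_of_step_eq hx hjj'.2 (by simpa only [add_right_comm] using hjj'.1)
    have := hc ⟨by omega, by omega⟩ ⟨by omega, by omega⟩ hcount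
    omega
  calc t = ((range t).image fun j => (x (a + 1 + j), f (x (a + j)))).card := hpairs.symm
    _ ≤ (W ×ˢ univ.image f).card := card_le_card fun p hp => by
      obtain ⟨j, hj, rfl⟩ := mem_image.1 hp
      rw [mem_range] at hj
      exact mem_product.2
        ⟨mem_image_of_mem _ (mem_range.2 (by omega)), mem_image_of_mem _ (mem_univ _)⟩
    _ = W.card * (univ.image f).card := card_product _ _

end CounterAssisted

theorem ZMod.natCast_injOn_Ico {n a t : ℕ} (ht : t ≤ n) :
    Set.InjOn (Nat.cast : ℕ → ZMod n) (Set.Ico a (a + t)) := by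
  rintro p ⟨hap, hpt⟩ q ⟨haq, hqt⟩ hpq
  rw [ZMod.natCast_eq_natCast_iff] at hpq
  exact le_antisymm (hpq.le_of_lt_add (by omega)) (hpq.symm.le_of_lt_add (by omega))

theorem stmt_18_general (n : ℕ) [NeZero n] (f : ZMod n → ZMod n)
    (x : ℕ → ZMod n)
    (hx : ∀ i, x (i + 1) = f (x i) + ((i + 1 : ℕ) : ZMod n))
    (i : ℕ) (hi : 1 ≤ i) (k : ℕ) :
    (k ≤ n →
      k - 1 ≤ ((Finset.range k).image (fun j => x (i + j))).card ^ 2 ∧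
      k ≤ ((Finset.range k).image (fun j => x (i + j))).card *
          (Finset.univ.image f).card) ∧
    (n < k →
      n ≤ ((Finset.range k).image (fun j => x (i + j))).card ^ 2 ∧
      n ≤ ((Finset.range k).image (fun j => x (i + j))).card *
          (Finset.univ.image f).card) := by
  obtain ⟨i, rfl⟩ := Nat.exists_eq_add_of_le' hi
  have hsq (t : ℕ) (htn : t ≤ n) (htk : t + 1 ≤ k) :=
    le_card_window_sq (a := i + 1) hx htk (ZMod.natCast_injOn_Ico htn)
  have hmul (t : ℕ) (htn : t ≤ n) (htk : t ≤ k) :=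
    le_card_window_mul_card_image (a := i) hx htk (ZMod.natCast_injOn_Ico htn)
  refine ⟨fun hkn => ⟨?_, hmul k hkn le_rfl⟩,
    fun hnk => ⟨hsq n le_rfl hnk, hmul n le_rfl hnk.le⟩⟩
  rcases k with _ | k
  · exact Nat.zero_le _
  · exact hsq k (by omega) le_rfl

/-- Combined diversity lower bound. For any `f : ZMod n → ZMod n`, the
counter-assisted generator `x_i = f (x_{i-1}) + i` is `max (γ k) (η k)`-diverse, where
`γ k = √(k-1)` for `k ≤ n` and `√n` for `k > n`, and `η k = k / |Im f|` for `k ≤ n` and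
`n / |Im f|` for `k > n`: every length-`k` window (starting at a position `i ≥ 1`) of
every state sequence contains `ν` distinct values with `ν² ≥ k - 1` and `ν·|Im f| ≥ k`
when `k ≤ n`, and `ν² ≥ n` and `ν·|Im f| ≥ n` when `k > n`. -/
theorem stmt_18 (n : ℕ) (hn : 2 ≤ n) [NeZero n] (f : ZMod n → ZMod n)
    (s : ZMod n) (x : ℕ → ZMod n) (hx0 : x 0 = s)
    (hx : ∀ i, x (i + 1) = f (x i) + ((i + 1 : ℕ) : ZMod n))
    (i : ℕ) (hi : 1 ≤ i) (k : ℕ) (hk : 1 ≤ k) :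
    (k ≤ n →
      k - 1 ≤ ((Finset.range k).image (fun j => x (i + j))).card ^ 2 ∧
      k ≤ ((Finset.range k).image (fun j => x (i + j))).card *
          (Finset.univ.image f).card) ∧
    (n < k →
      n ≤ ((Finset.range k).image (fun j => x (i + j))).card ^ 2 ∧
      n ≤ ((Finset.range k).image (fun j => x (i + j))).card *
          (Finset.univ.image f).card) :=
  stmt_18_general n f x hx i hi k
end
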